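/- Let D be the digraph on vertices v_1,…,v_n (n ≥ 4) with arcs v_i→v_1 and v_2→v_i for all i ∈ {3,…,n}, together with the arc v_1→v_2. Then D is strong, has diameter 3, and smc_v(D) = n − 1 = n − diam(D) + 2. -/

import Mathlib

namespace SVMC

variable {V : Type*}

/-- `IsWalk A u v l` : `u :: l` is a directed walk from `u` to `v` in the digraph
with arc relation `A`; its length (number of arcs) is `l.length`. -/
def IsWalk (A : V → V → Prop) (u v : V) (l : List V) : Prop :=
  List.Chain A u l ∧ (u :: l).getLast (List.cons_ne_nil u l) = v

/-- A directed path: a walk with no repeated vertices. -/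
def IsPath (A : V → V → Prop) (u v : V) (l : List V) : Prop :=
  IsWalk A u v l ∧ (u :: l).Nodup

def Reachable (A : V → V → Prop) (u v : V) : Prop := ∃ l, IsWalk A u v l

/-- A digraph is strong if every vertex is reachable from every other vertex. -/
def Strong (A : V → V → Prop) : Prop := ∀ u v : V, Reachable A u v

/-- Directed distance: the minimum length of a directed walk from `u` to `v`. -/
noncomputable def dist (A : V → V → Prop) (u v : V) : ℕ :=
  sInf {n | ∃ l, IsWalk A u v l ∧ l.length = n}

/-- Diameter: maximum directed distance over ordered pairs of vertices. -/
noncomputable def diam (A : V → V → Prop) : ℕ :=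
  sSup {d | ∃ u v : V, dist A u v = d}

/-- The internal vertices of the walk `u :: l` (ending at the last entry of `l`)
are `l.dropLast`.  `MonoInternal Γ l` says they all receive one color. -/
def MonoInternal (Γ : V → ℕ) (l : List V) : Prop :=
  ∃ c, ∀ x ∈ l.dropLast, Γ x = c

/-- A strong vertex-monochromatic connection coloring. -/
def IsSVMC (A : V → V → Prop) (Γ : V → ℕ) : Prop :=
  ∀ u v : V, ∃ l, IsPath A u v l ∧ MonoInternal Γ l

/-- The number of colors used by a vertex coloring. -/
noncomputable def colorCount (Γ : V → ℕ) : ℕ := (Set.range Γ).ncard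

/-- The strong vertex-monochromatic connection number. -/
noncomputable def smcv (A : V → V → Prop) : ℕ :=
  sSup {k | ∃ Γ : V → ℕ, IsSVMC A Γ ∧ colorCount Γ = k}

def TotalAbsorbing (A : V → V → Prop) (S : Set V) : Prop := ∀ v : V, ∃ w ∈ S, A v w

def TotalDominating (A : V → V → Prop) (S : Set V) : Prop := ∀ v : V, ∃ w ∈ S, A w v

def Absorbing (A : V → V → Prop) (S : Set V) : Prop := ∀ v ∉ S, ∃ w ∈ S, A v w

def Dominating (A : V → V → Prop) (S : Set V) : Prop := ∀ v ∉ S, ∃ w ∈ S, A w v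

/-- A walk all of whose vertices lie in `S`. -/
def IsWalkIn (A : V → V → Prop) (S : Set V) (u v : V) (l : List V) : Prop :=
  IsWalk A u v l ∧ ∀ x ∈ u :: l, x ∈ S

/-- The subdigraph induced by `S` is strongly connected. -/
def StrongOn (A : V → V → Prop) (S : Set V) : Prop :=
  ∀ u ∈ S, ∀ v ∈ S, ∃ l, IsWalkIn A S u v l

/-- `Ω_v(D)`: minimum order of a strong, absorbing and dominating subdigraph. -/
noncomputable def Omegav (A : V → V → Prop) : ℕ :=
  sInf {k | ∃ S : Set V, S.Nonempty ∧ StrongOn A S ∧ Absorbing A S ∧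
    Dominating A S ∧ S.ncard = k}

/-- A directed cycle through `u` with vertex list `u :: l` (length `l.length`). -/
def IsCycle (A : V → V → Prop) (u : V) (l : List V) : Prop :=
  l ≠ [] ∧ IsWalk A u u l ∧ (u :: l.dropLast).Nodup

/-- The girth: minimum length of a directed cycle. -/
noncomputable def girth (A : V → V → Prop) : ℕ :=
  sInf {n | ∃ u l, IsCycle A u l ∧ l.length = n}

/-- The arcs of the walk `u :: l` are the consecutive pairs, i.e. `(u :: l).zip l`.
`MonoArcs` says they all get one color under the arc coloring `ΓA`. -/
def MonoArcs (ΓA : V → V → ℕ) (u : V) (l : List V) : Prop :=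
  ∃ c, ∀ p ∈ (u :: l).zip l, ΓA p.1 p.2 = c

/-- A strong monochromatic connection (arc) coloring. -/
def IsSMC (A : V → V → Prop) (ΓA : V → V → ℕ) : Prop :=
  ∀ u v : V, ∃ l, IsPath A u v l ∧ MonoArcs ΓA u l

/-- The number of colors used on the arcs. -/
noncomputable def arcColorCount (A : V → V → Prop) (ΓA : V → V → ℕ) : ℕ :=
  ((fun p : V × V => ΓA p.1 p.2) '' {p : V × V | A p.1 p.2}).ncard

/-- The strong monochromatic connection number (arc version). -/
noncomputable def smc (A : V → V → Prop) : ℕ :=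
  sSup {k | ∃ ΓA : V → V → ℕ, IsSMC A ΓA ∧ arcColorCount A ΓA = k}

/-- The number of arcs of a digraph. -/
noncomputable def arcCount (A : V → V → Prop) : ℕ := {p : V × V | A p.1 p.2}.ncard

/-- `Ω(D)`: minimum number of arcs of a strong spanning subdigraph. -/
noncomputable def Omega (A : V → V → Prop) : ℕ :=
  sInf {k | ∃ B : V → V → Prop, (∀ u v, B u v → A u v) ∧ Strong B ∧ arcCount B = k}

/-- The arcs of `A`, as the vertex type of the line digraph. -/
def Arc (A : V → V → Prop) : Type _ := {p : V × V // A p.1 p.2}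

/-- Adjacency in the line digraph: head of `e` equals tail of `f`. -/
def lineAdj (A : V → V → Prop) : Arc A → Arc A → Prop :=
  fun e f => e.1.2 = f.1.1

/-- `(u,v)` is a bad pair: `N⁺(u) = {v}` and `N⁻(v) = {u}`. -/
def BadPair (A : V → V → Prop) (u v : V) : Prop :=
  {w | A u w} = {v} ∧ {w | A w v} = {u}

/-- A tournament: an orientation of a complete graph. -/
def IsTournament (A : V → V → Prop) : Prop :=
  (∀ v, ¬ A v v) ∧ ∀ u v : V, u ≠ v → (A u v ↔ ¬ A v u)

/-- The directed 3-cycle on `Fin 3`. -/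
def C3Adj : Fin 3 → Fin 3 → Prop := fun i j => j = i + 1

/-- `A` is isomorphic to the directed 3-cycle. -/
def IsoC3 (A : V → V → Prop) : Prop :=
  ∃ e : V ≃ Fin 3, ∀ u v : V, A u v ↔ C3Adj (e u) (e v)

end SVMC

/-!
In `D` every arc out of `v_i` (`i ≥ 3`) goes to `v_1`, whose only out-neighbour is `v_2`, so every
walk between two distinct vertices `v_i, v_j` with `i, j ≥ 3` starts `v_i v_1 v_2`. Hence
`d(v_3, v_4) = 3`, and every SVMC-coloring gives `v_1` and `v_2` the same color, so it uses at most
`n - 1` colors. Conversely all other distances are realised by paths whose internal vertices are a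
single vertex or exactly `v_1, v_2`, so coloring `v_1, v_2` alike and everything else injectively is
an SVMC-coloring with `n - 1` colors.
-/

namespace SVMC

variable {V : Type*} {A : V → V → Prop}

theorem isWalk_iff {u v : V} {l : List V} :
    IsWalk A u v l ↔ (u :: l).IsChain A ∧ (u :: l).getLast (List.cons_ne_nil u l) = v :=
  Iff.rfl

theorem dist_le_length {u v : V} {l : List V} (h : IsWalk A u v l) : dist A u v ≤ l.length :=
  Nat.sInf_le ⟨l, h, rfl⟩

theorem le_dist {u v : V} {k : ℕ} (huv : Reachable A u v)
    (h : ∀ l, IsWalk A u v l → k ≤ l.length) : k ≤ dist A u v := by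
  obtain ⟨l, hl⟩ := huv
  exact le_csInf ⟨_, l, hl, rfl⟩ fun _ ⟨l', hl', hlen⟩ => hlen ▸ h l' hl'

theorem diam_eq_of_forall_dist_le {k : ℕ} (hle : ∀ u v, dist A u v ≤ k) {u v : V}
    (huv : dist A u v = k) : diam A = k := by
  have hub : ∀ d ∈ {d | ∃ u v : V, dist A u v = d}, d ≤ k := by
    rintro _ ⟨u, v, rfl⟩
    exact hle u v
  exact le_antisymm (csSup_le ⟨k, u, v, huv⟩ hub) (le_csSup ⟨k, hub⟩ ⟨u, v, huv⟩)

theorem smcv_eq_of_forall_colorCount_le {k : ℕ} (hle : ∀ Γ, IsSVMC A Γ → colorCount Γ ≤ k)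
    {Γ : V → ℕ} (hΓ : IsSVMC A Γ) (hk : colorCount Γ = k) : smcv A = k := by
  have hub : ∀ c ∈ {c | ∃ Γ : V → ℕ, IsSVMC A Γ ∧ colorCount Γ = c}, c ≤ k := by
    rintro _ ⟨Γ', hΓ', rfl⟩
    exact hle Γ' hΓ'
  exact le_antisymm (csSup_le ⟨k, Γ, hΓ, hk⟩ hub) (le_csSup ⟨k, hub⟩ ⟨Γ, hΓ, hk⟩)

theorem MonoInternal.of_length_le_two {Γ : V → ℕ} {l : List V} (hl : l.length ≤ 2) :
    MonoInternal Γ l :=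
  match l, hl with
  | [], _ | [_], _ => ⟨0, by simp⟩
  | [x, _], _ => ⟨Γ x, by simp⟩

section ColorCount

variable {Γ : V → ℕ} {a b : V}

theorem range_eq_image_compl_singleton (hba : b ≠ a) (h : Γ a = Γ b) :
    Set.range Γ = Γ '' {a}ᶜ := by
  refine (Set.image_subset_range _ _).antisymm' ?_
  rintro _ ⟨x, rfl⟩
  by_cases hx : x = a
  · exact ⟨b, hba, by rw [hx, h]⟩
  · exact ⟨x, hx, rfl⟩

variable [Finite V]

theorem colorCount_le_of_apply_eq (hba : b ≠ a) (h : Γ a = Γ b) :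
    colorCount Γ ≤ Nat.card V - 1 := by
  rw [colorCount, range_eq_image_compl_singleton hba h, ← Set.ncard_singleton a,
    ← Set.ncard_compl]
  exact Set.ncard_image_le

theorem colorCount_eq_of_injOn (hba : b ≠ a) (h : Γ a = Γ b) (hinj : Set.InjOn Γ {a}ᶜ) :
    colorCount Γ = Nat.card V - 1 := by
  rw [colorCount, range_eq_image_compl_singleton hba h, hinj.ncard_image, Set.ncard_compl,
    Set.ncard_singleton]

end ColorCount

/-- The digraph `D` of the theorem, with `v_i` encoded as `i - 1 : Fin n`. -/
def tightAdj (n : ℕ) (i j : Fin n) : Prop :=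
  ((j : ℕ) = 0 ∧ 2 ≤ (i : ℕ)) ∨ ((i : ℕ) = 1 ∧ 2 ≤ (j : ℕ)) ∨ ((i : ℕ) = 0 ∧ (j : ℕ) = 1)

variable {n : ℕ}

theorem tightAdj_exists_path (hn : 3 ≤ n) (u v : Fin n) :
    ∃ l, IsPath (tightAdj n) u v l ∧
      (l.length ≤ 2 ∨ l = [⟨0, by omega⟩, ⟨1, by omega⟩, v]) := by
  obtain rfl | huv := eq_or_ne u v
  · exact ⟨[], by simp [IsPath, isWalk_iff], by simp⟩
  rw [Ne, Fin.ext_iff] at huv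
  rcases (show (u : ℕ) = 0 ∨ (u : ℕ) = 1 ∨ 2 ≤ (u : ℕ) by omega) with hu | hu | hu <;>
    rcases (show (v : ℕ) = 0 ∨ (v : ℕ) = 1 ∨ 2 ≤ (v : ℕ) by omega) with hv | hv | hv
  · omega
  · exact ⟨[v], by simp [IsPath, isWalk_iff, tightAdj, Fin.ext_iff]; omega, by simp⟩
  · exact ⟨[⟨1, by omega⟩, v],
      by simp [IsPath, isWalk_iff, tightAdj, Fin.ext_iff]; omega, by simp⟩
  · exact ⟨[⟨2, by omega⟩, v],
      by simp [IsPath, isWalk_iff, tightAdj, Fin.ext_iff]; omega, by simp⟩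
  · omega
  · exact ⟨[v], by simp [IsPath, isWalk_iff, tightAdj, Fin.ext_iff]; omega, by simp⟩
  · exact ⟨[v], by simp [IsPath, isWalk_iff, tightAdj, Fin.ext_iff]; omega, by simp⟩
  · exact ⟨[⟨0, by omega⟩, v],
      by simp [IsPath, isWalk_iff, tightAdj, Fin.ext_iff]; omega, by simp⟩
  · exact ⟨_, by simp [IsPath, isWalk_iff, tightAdj, Fin.ext_iff]; omega, Or.inr rfl⟩

theorem tightAdj_walk_eq {u v : Fin n} (hu : 2 ≤ (u : ℕ)) (hv : 2 ≤ (v : ℕ)) (huv : u ≠ v)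
    {l : List (Fin n)} (hl : IsWalk (tightAdj n) u v l) :
    ∃ a b c r, l = a :: b :: c :: r ∧ (a : ℕ) = 0 ∧ (b : ℕ) = 1 := by
  rw [isWalk_iff] at hl
  match l, hl with
  | [], ⟨_, hlast⟩ => exact absurd hlast huv
  | [_], hl | [_, _], hl =>
    simp only [tightAdj, List.isChain_cons_cons, List.getLast_cons_cons,
      List.getLast_singleton] at hl
    omega
  | a :: b :: c :: r, ⟨hchain, _⟩ =>
    simp only [tightAdj, List.isChain_cons_cons] at hchain
    exact ⟨a, b, c, r, rfl, by omega, by omega⟩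

theorem tightAdj_strong (hn : 3 ≤ n) : Strong (tightAdj n) := fun u v =>
  let ⟨l, hl, _⟩ := tightAdj_exists_path hn u v
  ⟨l, hl.1⟩

theorem tightAdj_dist_le (hn : 3 ≤ n) (u v : Fin n) : dist (tightAdj n) u v ≤ 3 := by
  obtain ⟨l, hl, hlen⟩ := tightAdj_exists_path hn u v
  refine (dist_le_length hl.1).trans ?_
  rcases hlen with hlen | rfl
  · omega
  · simp

theorem tightAdj_diam (hn : 4 ≤ n) : diam (tightAdj n) = 3 := by
  refine diam_eq_of_forall_dist_le (tightAdj_dist_le (by omega))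
    (u := ⟨2, by omega⟩) (v := ⟨3, by omega⟩) (le_antisymm (tightAdj_dist_le (by omega) _ _) ?_)
  refine le_dist (tightAdj_strong (by omega) _ _) fun l hl => ?_
  obtain ⟨a, b, c, r, rfl, -, -⟩ := tightAdj_walk_eq le_rfl (by simp) (by simp [Fin.ext_iff]) hl
  simp

theorem isSVMC_tightAdj_iff (hn : 4 ≤ n) {Γ : Fin n → ℕ} :
    IsSVMC (tightAdj n) Γ ↔ Γ ⟨0, by omega⟩ = Γ ⟨1, by omega⟩ := by
  constructor
  · intro hΓ
    obtain ⟨l, hl, c, hc⟩ := hΓ ⟨2, by omega⟩ ⟨3, by omega⟩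
    obtain ⟨a, b, d, r, rfl, ha, hb⟩ :=
      tightAdj_walk_eq le_rfl (by simp) (by simp [Fin.ext_iff]) hl.1
    rw [show (⟨0, _⟩ : Fin n) = a from Fin.ext ha.symm, show (⟨1, _⟩ : Fin n) = b from
      Fin.ext hb.symm, hc a (by simp), hc b (by simp)]
  · intro h u v
    obtain ⟨l, hl, hlen⟩ := tightAdj_exists_path (by omega) u v
    refine ⟨l, hl, ?_⟩
    rcases hlen with hlen | rfl
    · exact .of_length_le_two hlen
    · exact ⟨Γ ⟨0, by omega⟩, by simp [h]⟩

theorem tightAdj_smcv (hn : 4 ≤ n) : smcv (tightAdj n) = n - 1 := by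
  have h01 : (⟨1, by omega⟩ : Fin n) ≠ ⟨0, by omega⟩ := by simp
  refine smcv_eq_of_forall_colorCount_le (fun Γ hΓ => ?_)
    ((isSVMC_tightAdj_iff hn (Γ := fun i => max (i : ℕ) 1)).2 rfl) ?_
  · simpa using colorCount_le_of_apply_eq h01 ((isSVMC_tightAdj_iff hn).1 hΓ)
  · have hinj : Set.InjOn (fun i : Fin n => max (i : ℕ) 1) {⟨0, by omega⟩}ᶜ := by
      intro i hi j hj hij
      simp only [Set.mem_compl_iff, Set.mem_singleton_iff, Fin.ext_iff] at hi hj hij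
      exact Fin.ext (by omega)
    simpa using colorCount_eq_of_injOn h01 rfl hinj

end SVMC

/-- the digraph on `v_1, …, v_n` (`n ≥ 4`) with arcs `v_i → v_1`
and `v_2 → v_i` for all `i ∈ {3,…,n}`, together with `v_1 → v_2`
(here `v_i` is index `i - 1` in `Fin n`), is strong, has diameter `3`, and
satisfies `smc_v(D) = n - 1 = n - diam(D) + 2`. -/
theorem smcv_example_diam_tight (n : ℕ) (hn : 4 ≤ n)
    (A : Fin n → Fin n → Prop)
    (hA : ∀ i j : Fin n, A i j ↔
      (((j : ℕ) = 0 ∧ 2 ≤ (i : ℕ)) ∨ ((i : ℕ) = 1 ∧ 2 ≤ (j : ℕ)) ∨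
        ((i : ℕ) = 0 ∧ (j : ℕ) = 1))) :
    SVMC.Strong A ∧ SVMC.diam A = 3 ∧
      SVMC.smcv A = n - 1 ∧ SVMC.smcv A = n - SVMC.diam A + 2 := by
  obtain rfl : A = SVMC.tightAdj n := funext₂ fun i j => propext (hA i j)
  have hdiam := SVMC.tightAdj_diam hn
  have hsmcv := SVMC.tightAdj_smcv hn
  refine ⟨SVMC.tightAdj_strong (by omega), hdiam, hsmcv, ?_⟩
  rw [hsmcv, hdiam]
  omega
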